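/- arXiv:1903.06967 — 2 statements merged into one kernel-verified Lean document; each statement's English description precedes it below -/
import Mathlib

section
/- Let f be a homogeneous polynomial of degree d ≥ 2 in the n+1 variables x_0,…,x_n over ℂ, and let P ∈ ℂ^{n+1} be a smooth point of V(f), i.e. f(P) = 0 and the gradient (∂f/∂x_0(P),…,∂f/∂x_n(P)) is nonzero. Let B_P be the Hessian bilinear form of f at P and T_P the tangent space at P. Then rank H(f)(P) = rank(B_P restricted to T_P) + 2, where rank H(f)(P) is the rank of the evaluated Hessian matrix and the rank of the restricted bilinear form is its rank as a bilinear form on the n-dimensional space T_P. (Equivalently: the rank of the second fundamental form II_P of V(f) at P equals rank H(f)(P) − 2.) -/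
open MvPolynomial

/-- The Hessian matrix `H(f)` of a polynomial in the `n+1` variables `x_0, …, x_n`:
the `(n+1)×(n+1)` matrix of second partial derivatives `∂²f/∂x_i∂x_j`. -/
noncomputable def hessianMatrix (n : ℕ) (f : MvPolynomial (Fin (n + 1)) ℂ) :
    Matrix (Fin (n + 1)) (Fin (n + 1)) (MvPolynomial (Fin (n + 1)) ℂ) :=
  fun i j => pderiv i (pderiv j f)

/-- The Hessian polynomial `h(f) = det H(f)`. -/
noncomputable def hessianPoly (n : ℕ) (f : MvPolynomial (Fin (n + 1)) ℂ) :
    MvPolynomial (Fin (n + 1)) ℂ :=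
  (hessianMatrix n f).det

/-- The tangent space `T_P = {v ∈ ℂ^{n+1} : ∑ i, v i * ∂f/∂x_i(P) = 0}`. -/
noncomputable def tangentSpace (n : ℕ) (f : MvPolynomial (Fin (n + 1)) ℂ)
    (P : Fin (n + 1) → ℂ) : Submodule ℂ (Fin (n + 1) → ℂ) where
  carrier := {v | ∑ i, v i * eval P (pderiv i f) = 0}
  add_mem' := by
    intro a b ha hb
    simp only [Set.mem_setOf_eq, Pi.add_apply, add_mul, Finset.sum_add_distrib] at *
    simp [ha, hb]
  zero_mem' := by simp
  smul_mem' := by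
    intro c a ha
    simp only [Set.mem_setOf_eq, Pi.smul_apply, smul_eq_mul, mul_assoc, ← Finset.mul_sum] at *
    simp [ha]

/-- The Hessian bilinear form at `P`:
`B_P(v, w) = ∑ i j, v i * w j * (∂²f/∂x_i∂x_j)(P)`. -/
noncomputable def hessianForm (n : ℕ) (f : MvPolynomial (Fin (n + 1)) ℂ)
    (P : Fin (n + 1) → ℂ) : LinearMap.BilinForm ℂ (Fin (n + 1) → ℂ) :=
  Matrix.toBilin' ((hessianMatrix n f).map (eval P))

/-- The rank of a bilinear form on a module: the dimension of the image of the
associated linear map `M →ₗ (M →ₗ ℂ)`. -/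
noncomputable def bilinRank {M : Type*} [AddCommGroup M] [Module ℂ M]
    (B : LinearMap.BilinForm ℂ M) : ℕ :=
  Module.finrank ℂ (LinearMap.range B)

/-! Euler's identity applied to each `∂f/∂x_j` gives `Pᵀ H(f)(P) = (d - 1) ∇f(P)`, so the linear
form `B_P(P, ·)` is a nonzero multiple of `∇f(P)`: its kernel is `T_P`, and
`B_P(P, P) = d (d - 1) f(P) = 0`.

For a symmetric bilinear form `B` and a vector `P` with `B(P, ·) ≠ 0` and `B(P, P) = 0`,
restricting `B` to the hyperplane `W = ker B(P, ·)` lowers the rank by exactly two. First,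
`B(W)` has codimension one in the image of `B`, because `W ⊇ ker B`. Second, restricting
functionals from `V` to `W` kills exactly the line through `B(P, ·)`, and that line lies in
`B(W)` because `P ∈ W`. -/

open Module LinearMap

theorem MvPolynomial.pderiv_pderiv_comm {R σ : Type*} [CommRing R] (i j : σ)
    (f : MvPolynomial σ R) : pderiv i (pderiv j f) = pderiv j (pderiv i f) := by
  classical
  have h : ⁅pderiv (R := R) i, pderiv (R := R) j⁆ = 0 := by
    refine derivation_ext fun k => ?_
    rw [Derivation.commutator_apply]
    simp only [pderiv_X, Pi.single_apply]
    split_ifs <;> simp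
  have hf := congr($h f)
  rwa [Derivation.commutator_apply, Derivation.zero_apply, sub_eq_zero] at hf

theorem MvPolynomial.IsHomogeneous.sum_mul_eval_pderiv {R σ : Type*} [CommSemiring R]
    [Fintype σ] {φ : MvPolynomial σ R} {d : ℕ} (h : φ.IsHomogeneous d) (P : σ → R) :
    ∑ i, P i * eval P (pderiv i φ) = d * eval P φ := by
  simpa [nsmul_eq_mul] using congr(eval P $(h.sum_X_mul_pderiv))

theorem Submodule.finrank_map_add_finrank_inf_ker {K V V₂ : Type*} [DivisionRing K]
    [AddCommGroup V] [Module K V] [AddCommGroup V₂] [Module K V₂]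
    (f : V →ₗ[K] V₂) (p : Submodule K V) [FiniteDimensional K p] :
    finrank K (p.map f) + finrank K ↥(p ⊓ ker f) = finrank K p := by
  rw [← range_domRestrict, ← finrank_range_add_finrank_ker (f.domRestrict p), ker_domRestrict,
    ← Submodule.map_comap_subtype,
    (Submodule.equivMapOfInjective _ p.subtype_injective _).finrank_eq]

theorem Module.Dual.dualAnnihilator_ker_eq_span_singleton {K V : Type*} [Field K]
    [AddCommGroup V] [Module K V] [FiniteDimensional K V] {φ : Dual K V} (hφ : φ ≠ 0) :
    (ker φ).dualAnnihilator = K ∙ φ := by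
  refine (Submodule.eq_of_le_of_finrank_le ?_ ?_).symm
  · exact (Submodule.span_singleton_le_iff_mem _ _).2 <| (Submodule.mem_dualAnnihilator _).2
      fun _ hw => hw
  · have h := Subspace.finrank_add_finrank_dualAnnihilator_eq (ker φ)
    have h' := Dual.finrank_ker_add_one_of_ne_zero hφ
    rw [finrank_span_singleton hφ]
    omega

theorem LinearMap.BilinForm.range_restrict {R M : Type*} [CommRing R] [AddCommGroup M]
    [Module R M] (B : LinearMap.BilinForm R M) (W : Submodule R M) :
    range (B.restrict W) = (W.map B).map W.dualRestrict := by
  have h : B.restrict W = W.dualRestrict ∘ₗ B ∘ₗ W.subtype := rfl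
  rw [h, range_comp, range_comp, Submodule.range_subtype]

theorem Matrix.finrank_range_toBilin' {K n : Type*} [Field K] [Fintype n] [DecidableEq n]
    (M : Matrix n n K) : finrank K (range (Matrix.toBilin' M)) = M.rank := by
  have h : Matrix.toBilin' M = (dotProductEquiv K n).toLinearMap ∘ₗ M.transpose.mulVecLin := by
    ext v w
    simp [Matrix.toBilin'_apply']
  rw [h, range_comp, LinearEquiv.finrank_map_eq, ← Matrix.rank_transpose]
  rfl

theorem LinearMap.BilinForm.IsSymm.finrank_range_eq_finrank_range_restrict_ker_add_two
    {K V : Type*} [Field K] [AddCommGroup V] [Module K V] [FiniteDimensional K V]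
    {B : LinearMap.BilinForm K V} (hB : B.IsSymm) {P : V} (hP : B P ≠ 0) (hPP : B P P = 0) :
    finrank K (range B) = finrank K (range (B.restrict (ker (B P)))) + 2 := by
  set W := ker (B P)
  have hW : finrank K W + 1 = finrank K V := Dual.finrank_ker_add_one_of_ne_zero hP
  have hker : ker B ≤ W := fun x hx => by
    rw [mem_ker] at hx ⊢
    rw [← hB.eq, hx, LinearMap.zero_apply]
  have hmap : finrank K (W.map B) + finrank K (ker B) = finrank K W := by
    rw [← inf_eq_right.2 hker]
    exact Submodule.finrank_map_add_finrank_inf_ker B W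
  have hann : W.dualAnnihilator ≤ W.map B := by
    rw [Dual.dualAnnihilator_ker_eq_span_singleton hP, Submodule.span_singleton_le_iff_mem]
    exact ⟨P, hPP, rfl⟩
  have hrestrict : finrank K (range (B.restrict W)) + 1 = finrank K (W.map B) := by
    have h := Submodule.finrank_map_add_finrank_inf_ker W.dualRestrict (W.map B)
    rwa [← range_restrict, Submodule.dualRestrict_ker_eq_dualAnnihilator, inf_eq_right.2 hann,
      Dual.dualAnnihilator_ker_eq_span_singleton hP, finrank_span_singleton hP] at h
  have hrank : finrank K (range B) + finrank K (ker B) = finrank K V :=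
    finrank_range_add_finrank_ker B
  omega

theorem hessianMatrix_isSymm (n : ℕ) (f : MvPolynomial (Fin (n + 1)) ℂ) :
    (hessianMatrix n f).IsSymm :=
  Matrix.IsSymm.ext fun i j => pderiv_pderiv_comm j i f

theorem hessianForm_isSymm (n : ℕ) (f : MvPolynomial (Fin (n + 1)) ℂ) (P : Fin (n + 1) → ℂ) :
    (hessianForm n f P).IsSymm :=
  Matrix.isSymm_toBilin'_iff_isSymm.2 ((hessianMatrix_isSymm n f).map _)

theorem vecMul_hessianMatrix_map_eval {n d : ℕ} {f : MvPolynomial (Fin (n + 1)) ℂ}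
    (hhom : f.IsHomogeneous d) (P : Fin (n + 1) → ℂ) :
    Matrix.vecMul P ((hessianMatrix n f).map (eval P)) =
      ((d - 1 : ℕ) : ℂ) • fun j => eval P (pderiv j f) := by
  ext j
  exact hhom.pderiv.sum_mul_eval_pderiv P

theorem hessianForm_point_apply {n d : ℕ} {f : MvPolynomial (Fin (n + 1)) ℂ}
    (hhom : f.IsHomogeneous d) (P v : Fin (n + 1) → ℂ) :
    hessianForm n f P P v = ((d - 1 : ℕ) : ℂ) * ∑ i, v i * eval P (pderiv i f) := by
  rw [hessianForm, Matrix.toBilin'_apply', Matrix.dotProduct_mulVec,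
    vecMul_hessianMatrix_map_eval hhom, smul_dotProduct, smul_eq_mul, dotProduct_comm]
  rfl

theorem rank_hessianMatrix_eq_rank_restricted_add_two_general (n d : ℕ) (hd : 2 ≤ d)
    (f : MvPolynomial (Fin (n + 1)) ℂ) (hhom : f.IsHomogeneous d)
    (P : Fin (n + 1) → ℂ) (hfP : eval P f = 0)
    (hsm : ∃ i, eval P (pderiv i f) ≠ 0) :
    ((hessianMatrix n f).map (eval P)).rank =
      bilinRank ((hessianForm n f P).restrict (tangentSpace n f P)) + 2 := by
  have hd' : ((d - 1 : ℕ) : ℂ) ≠ 0 := by norm_cast; omega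
  have hT : tangentSpace n f P = ker (hessianForm n f P P) := by
    ext v
    rw [mem_ker, hessianForm_point_apply hhom, mul_eq_zero, or_iff_right hd']
    rfl
  have hP : hessianForm n f P P ≠ 0 := by
    obtain ⟨i, hi⟩ := hsm
    refine fun h => hi ?_
    simpa [hessianForm_point_apply hhom, hd', Pi.single_apply] using congr($h (Pi.single i 1))
  have hPP : hessianForm n f P P P = 0 := by
    rw [hessianForm_point_apply hhom, hhom.sum_mul_eval_pderiv, hfP, mul_zero, mul_zero]
  rw [← Matrix.finrank_range_toBilin', bilinRank, hT]
  exact (hessianForm_isSymm n f P).finrank_range_eq_finrank_range_restrict_ker_add_two hP hPP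

/-- If `f` is homogeneous of degree `d ≥ 2` and `P` is a smooth point of `V(f)`
(`P ≠ 0`, `f(P) = 0`, gradient of `f` at `P` nonzero), then the rank of the evaluated
Hessian matrix `H(f)(P)` equals the rank of the Hessian bilinear form `B_P` restricted to
the tangent space `T_P`, plus `2`.  (Equivalently, `rank II_P = rank H(f)(P) - 2`.) -/
theorem rank_hessianMatrix_eq_rank_restricted_add_two (n d : ℕ) (hd : 2 ≤ d)
    (f : MvPolynomial (Fin (n + 1)) ℂ) (hhom : f.IsHomogeneous d)
    (P : Fin (n + 1) → ℂ) (hP : P ≠ 0) (hfP : eval P f = 0)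
    (hsm : ∃ i, eval P (pderiv i f) ≠ 0) :
    ((hessianMatrix n f).map (eval P)).rank =
      bilinRank ((hessianForm n f P).restrict (tangentSpace n f P)) + 2 :=
  rank_hessianMatrix_eq_rank_restricted_add_two_general n d hd f hhom P hfP hsm
end

section
/- (Segre's theorem.) Let f be an irreducible homogeneous polynomial of degree d ≥ 3 in the n+1 variables x_0,…,x_n over ℂ, and let 1 ≤ h ≤ n−1. Suppose every smooth point P of the hypersurface X = V(f) is h-parabolic, i.e. the evaluated Hessian matrix H(f)(P) has rank n − h + 1 (equivalently, the second fundamental form II_P has rank n − h − 1). Then f^h divides the Hessian polynomial h(f) = det H(f); that is, X is an h-tuple component of its Hessian. -/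
open MvPolynomial

/-!
At a smooth point the Hessian has rank `n - h + 1`, so every minor of size `n - h + 2` vanishes
on the smooth locus of `X`. Since `f` is prime and does not divide all of its partial derivatives,
the Nullstellensatz makes these minors divisible by `f`; hence the Hessian matrix, read in the
function field `K` of `X` (the fraction field of `ℂ[x] ⧸ (f)`), has rank at most `(n + 1) - h`.

If a square matrix `M` over a domain has rank at most `N - t` modulo a prime `p`, then
`p ^ t ∣ det M`: a kernel vector of `M` modulo `p`, with denominators cleared, is a vector `e`
with `M e = p w` and `p ∤ e j`, and Cramer's rule gives `det M * e j = p * det M'`, where `M'`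
is `M` with column `j` replaced by `w`; the rank of `M'` modulo `p` exceeds that of `M` by at
most one, so induction on `t` applies.
-/

namespace Matrix

section Field

variable {K m n : Type*} [Field K] [Fintype n]

theorem exists_linearIndependent_col_comp_of_le_rank (A : Matrix m n K) {s : ℕ}
    (hs : s ≤ A.rank) : ∃ σ : Fin s → n, LinearIndependent K (A.col ∘ σ) := by
  obtain ⟨κ, a, ha, hspan, hli⟩ := exists_linearIndependent' K A.col
  have : Fintype κ := have := Finite.of_injective a ha; Fintype.ofFinite κ
  have hcard : A.rank = Fintype.card κ := by
    rw [rank_eq_finrank_span_cols, ← hspan, finrank_span_eq_card hli]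
  obtain ⟨e⟩ : Nonempty (Fin s ↪ κ) :=
    Function.Embedding.nonempty_of_card_le (by rw [Fintype.card_fin]; omega)
  exact ⟨a ∘ e, hli.comp e e.injective⟩

theorem det_submatrix_eq_zero_of_rank_lt (A : Matrix m n K) {s : ℕ} (hs : A.rank < s)
    (ρ : Fin s → m) (σ : Fin s → n) : (A.submatrix ρ σ).det = 0 := by
  by_contra hdet
  have := A.rank_submatrix_le ρ σ
  rw [rank_of_det_ne_zero hdet, Fintype.card_fin] at this
  omega

theorem rank_lt_of_forall_det_submatrix_eq_zero [Fintype m] {A : Matrix m n K} {s : ℕ}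
    (h : ∀ (ρ : Fin s → m) (σ : Fin s → n), (A.submatrix ρ σ).det = 0) : A.rank < s := by
  by_contra! hs
  obtain ⟨σ, hσ⟩ := A.exists_linearIndependent_col_comp_of_le_rank hs
  have hrank : (A.submatrix id σ)ᵀ.rank = s := by
    simpa using hσ.rank_matrix (M := (A.submatrix id σ)ᵀ)
  obtain ⟨ρ, hρ⟩ := (A.submatrix id σ)ᵀ.exists_linearIndependent_col_comp_of_le_rank hrank.ge
  exact (isUnit_iff_isUnit_det _).mp (linearIndependent_rows_iff_isUnit.mp hρ) |>.ne_zero (h ρ σ)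

theorem rank_add_le (A B : Matrix m n K) : (A + B).rank ≤ A.rank + B.rank := by
  rw [rank, rank, rank, mulVecLin_add]
  exact (Submodule.finrank_mono (LinearMap.range_add_le _ _)).trans
    (Submodule.finrank_add_le_finrank_add_finrank _ _)

theorem rank_updateCol_le [DecidableEq n] (A : Matrix m n K) (j : n) (v : m → K) :
    (A.updateCol j v).rank ≤ A.rank + 1 := by
  have : A.updateCol j v = A + vecMulVec (v - A.col j) (Pi.single j 1) := by
    ext i k
    rcases eq_or_ne k j with rfl | hk <;> simp [vecMulVec_apply, *]
  rw [this]
  exact (rank_add_le _ _).trans (by gcongr; exact rank_vecMulVec_le _ _)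

end Field

theorem det_mul_eq_mul_det_updateCol {R m : Type*} [CommRing R] [Fintype m] [DecidableEq m]
    {M : Matrix m m R} {e w : m → R} {p : R} (h : M *ᵥ e = p • w) (j : m) :
    M.det * e j = p * (M.updateCol j w).det := by
  rw [← det_updateCol_smul, ← h, ← cramer_apply, cramer_eq_adjugate_mulVec, mulVec_mulVec,
    adjugate_mul, smul_mulVec, one_mulVec, Pi.smul_apply, smul_eq_mul]

section ModPrime

variable {R : Type*} [CommRing R] {p : R}

theorem rank_map_lt_of_forall_dvd_det_submatrix {m n : Type*} [Fintype m] [Fintype n]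
    (hp : Prime p) {M : Matrix m n R} {s : ℕ}
    (h : ∀ (ρ : Fin s → m) (σ : Fin s → n), p ∣ (M.submatrix ρ σ).det) :
    (M.map (algebraMap R (FractionRing (R ⧸ Ideal.span {p})))).rank < s := by
  have := (Ideal.span_singleton_prime hp.ne_zero).mpr hp
  refine rank_lt_of_forall_det_submatrix_eq_zero fun ρ σ => ?_
  obtain ⟨q, hq⟩ := h ρ σ
  rw [submatrix_map, ← RingHom.mapMatrix_apply, ← RingHom.map_det, hq, map_mul,
    IsScalarTower.algebraMap_apply R (R ⧸ Ideal.span {p}), Ideal.Quotient.algebraMap_eq,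
    Ideal.Quotient.mk_singleton_self, map_zero, zero_mul]

variable {m : Type*} [Fintype m] [DecidableEq m]

theorem exists_mulVec_eq_smul_of_det_map_eq_zero (hp : Prime p) {M : Matrix m m R}
    (h : (M.map (algebraMap R (FractionRing (R ⧸ Ideal.span {p})))).det = 0) :
    ∃ e w : m → R, M *ᵥ e = p • w ∧ ∃ j, ¬ p ∣ e j := by
  set A := R ⧸ Ideal.span {p}
  have := (Ideal.span_singleton_prime hp.ne_zero).mpr hp
  set φ := algebraMap R (FractionRing A)
  have hker (x : R) : φ x = 0 ↔ p ∣ x := by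
    rw [IsScalarTower.algebraMap_apply R A, IsFractionRing.to_map_eq_zero_iff,
      Ideal.Quotient.algebraMap_eq, Ideal.Quotient.eq_zero_iff_mem, Ideal.mem_span_singleton]
  obtain ⟨c, hc0, hc⟩ := exists_mulVec_eq_zero_iff.mpr h
  obtain ⟨⟨b, hb⟩, hbc⟩ := IsLocalization.exist_integer_multiples_of_finite (nonZeroDivisors A) c
  choose a ha using hbc
  choose e he using fun i => Ideal.Quotient.mk_surjective (a i)
  have hφe : φ ∘ e = b • c := by
    ext i
    rw [Function.comp_apply, IsScalarTower.algebraMap_apply R A, Ideal.Quotient.algebraMap_eq, he,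
      ha, Pi.smul_apply]
  have hMe (i : m) : p ∣ (M *ᵥ e) i := by
    rw [← hker, RingHom.map_mulVec, hφe, mulVec_smul, hc, smul_zero, Pi.zero_apply]
  choose w hw using hMe
  obtain ⟨j, hj⟩ := Function.ne_iff.mp hc0
  refine ⟨e, w, funext hw, j, fun hdvd => ?_⟩
  rw [← hker, ← Function.comp_apply (f := φ), hφe, Pi.smul_apply, smul_eq_zero] at hdvd
  exact hdvd.elim (nonZeroDivisors.ne_zero hb) hj

theorem pow_dvd_det_of_rank_map_add_le [IsDomain R] (hp : Prime p) {t : ℕ} (M : Matrix m m R)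
    (ht : (M.map (algebraMap R (FractionRing (R ⧸ Ideal.span {p})))).rank + t ≤ Fintype.card m) :
    p ^ t ∣ M.det := by
  have := (Ideal.span_singleton_prime hp.ne_zero).mpr hp
  set φ := algebraMap R (FractionRing (R ⧸ Ideal.span {p}))
  induction t generalizing M with
  | zero => simp
  | succ t ih =>
    have hdet : (M.map φ).det = 0 := by
      by_contra hdet
      rw [rank_of_det_ne_zero hdet] at ht
      omega
    obtain ⟨e, w, hw, j, hj⟩ := exists_mulVec_eq_smul_of_det_map_eq_zero hp hdet
    have hrank := rank_updateCol_le (M.map φ) j (φ ∘ w)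
    rw [← map_updateCol] at hrank
    refine hp.pow_dvd_of_dvd_mul_right _ hj ?_
    rw [det_mul_eq_mul_det_updateCol hw, pow_succ']
    exact mul_dvd_mul_left p (ih _ (by omega))

end ModPrime

end Matrix

namespace MvPolynomial

theorem IsHomogeneous.eval_zero_eq_zero {σ R : Type*} [CommSemiring R] {φ : MvPolynomial σ R}
    {n : ℕ} (hφ : φ.IsHomogeneous n) (hn : n ≠ 0) : eval 0 φ = 0 := by
  rw [eval_zero, constantCoeff_eq, hφ.coeff_eq_zero (by simpa using hn.symm)]

theorem IsHomogeneous.exists_not_dvd_pderiv {σ R : Type*} [Fintype σ] [CommRing R] [IsDomain R]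
    [CharZero R] {f : MvPolynomial σ R} {d : ℕ} (hf : f.IsHomogeneous d) (hf0 : f ≠ 0)
    (hd : d ≠ 0) : ∃ i, ¬ f ∣ pderiv i f := by
  by_contra! hdvd
  have hpderiv (i : σ) : pderiv i f = 0 := by
    by_contra hne
    have := totalDegree_le_of_dvd_of_isDomain (hdvd i) hne
    rw [hf.totalDegree hf0, hf.pderiv.totalDegree hne] at this
    omega
  have := hf.sum_X_mul_pderiv
  simp only [hpderiv, mul_zero, Finset.sum_const_zero] at this
  exact hf0 ((smul_eq_zero.mp this.symm).resolve_left hd)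

variable {σ k : Type*} [Fintype σ] [Field k] [IsAlgClosed k]

theorem dvd_of_forall_eval_eq_zero {f g : MvPolynomial σ k} (hf : Prime f)
    (hg : ∀ x, eval x f = 0 → eval x g = 0) : f ∣ g := by
  rw [← Ideal.mem_span_singleton, ← ((Ideal.span_singleton_prime hf.ne_zero).mpr hf).radical,
    ← vanishingIdeal_zeroLocus_eq_radical (K := k)]
  exact fun x hx => by simpa using hg x (by simpa using hx f (Ideal.mem_span_singleton_self f))

theorem dvd_of_forall_smooth_eval_eq_zero [CharZero k] {f g : MvPolynomial σ k} {d : ℕ}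
    (hf : Prime f) (hhom : f.IsHomogeneous d) (hd : 2 ≤ d)
    (hg : ∀ P : σ → k, P ≠ 0 → eval P f = 0 → (∃ i, eval P (pderiv i f) ≠ 0) → eval P g = 0) :
    f ∣ g := by
  obtain ⟨i, hi⟩ := hhom.exists_not_dvd_pderiv hf.ne_zero (by omega)
  refine (hf.dvd_or_dvd (dvd_of_forall_eval_eq_zero hf fun P hP => ?_)).resolve_right hi
  rw [map_mul]
  rcases eq_or_ne P 0 with rfl | hP0
  · rw [hhom.pderiv.eval_zero_eq_zero (by omega), mul_zero]
  by_cases hsmooth : ∃ j, eval P (pderiv j f) ≠ 0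
  · rw [hg P hP0 hP hsmooth, zero_mul]
  · rw [not_exists_not.mp hsmooth i, mul_zero]

end MvPolynomial

theorem segre_pow_dvd_hessian_general (n d h : ℕ) (hd : 3 ≤ d) (h2 : h ≤ n - 1)
    (f : MvPolynomial (Fin (n + 1)) ℂ) (hirr : Irreducible f) (hhom : f.IsHomogeneous d)
    (hpar : ∀ P : Fin (n + 1) → ℂ, P ≠ 0 → eval P f = 0 →
      (∃ i, eval P (pderiv i f) ≠ 0) →
      ((hessianMatrix n f).map (eval P)).rank = n - h + 1) :
    f ^ h ∣ hessianPoly n f := by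
  have hf : Prime f := hirr.prime
  have hminor (ρ σ : Fin (n - h + 2) → Fin (n + 1)) :
      f ∣ ((hessianMatrix n f).submatrix ρ σ).det := by
    refine dvd_of_forall_smooth_eval_eq_zero hf hhom (by omega) fun P hP0 hPf hPs => ?_
    rw [RingHom.map_det, RingHom.mapMatrix_apply, ← Matrix.submatrix_map]
    exact Matrix.det_submatrix_eq_zero_of_rank_lt _ (by rw [hpar P hP0 hPf hPs]; omega) ρ σ
  have hrank := Matrix.rank_map_lt_of_forall_dvd_det_submatrix hf hminor
  refine Matrix.pow_dvd_det_of_rank_map_add_le hf _ ?_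
  rw [Fintype.card_fin]
  omega

/-- Segre's theorem: Let `f` be an irreducible homogeneous polynomial of
degree `d ≥ 3` and `1 ≤ h ≤ n - 1`.  If every smooth point `P` of `X = V(f)` is
`h`-parabolic, i.e. the evaluated Hessian matrix `H(f)(P)` has rank `n - h + 1`
(equivalently `rank II_P = n - h - 1`), then `f ^ h` divides the Hessian polynomial
`h(f) = det H(f)`: `X` is an `h`-tuple component of its Hessian. -/
theorem segre_pow_dvd_hessian (n d h : ℕ) (hd : 3 ≤ d) (h1 : 1 ≤ h) (h2 : h ≤ n - 1)
    (f : MvPolynomial (Fin (n + 1)) ℂ) (hirr : Irreducible f) (hhom : f.IsHomogeneous d)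
    (hpar : ∀ P : Fin (n + 1) → ℂ, P ≠ 0 → eval P f = 0 →
      (∃ i, eval P (pderiv i f) ≠ 0) →
      ((hessianMatrix n f).map (eval P)).rank = n - h + 1) :
    f ^ h ∣ hessianPoly n f :=
  segre_pow_dvd_hessian_general n d h hd h2 f hirr hhom hpar
end
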